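/- Let h(x) = -x·log(x) - (1-x)·log(1-x) be the binary entropy function on [0,1/2], and let h^{-1} denote its inverse mapping [0, log 2] to [0, 1/2]. Then as ε → 0+, h^{-1}(log 2 - ε) = 1/2 - (1/√2)·√ε + O(ε^{3/2}). Equivalently, there exist constants C, ε₀ > 0 such that for all 0 < ε < ε₀, |h^{-1}(log 2 - ε) - (1/2 - √(ε/2))| ≤ C·ε^{3/2}. -/

import Mathlib

/-!
Write `x = 1/2 - t`. The entropy gap `log 2 - h(1/2 - t)` vanishes at `t = 0` and has derivative
`log (1 + 2t) - log (1 - 2t) = 2 artanh (2t)`, which the artanh series squeezes between `4t` and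
`4t / (1 - 4t²)`. Integrating gives `2t² ≤ ε ≤ 2t² + 8t⁴`; the lower bound alone already makes `t`
small, and then `t ≤ √(ε/2) ≤ t + 2t³`, with `2t³ ≤ ε^{3/2}`.
-/

open Real

namespace Real

lemma two_mul_le_log_one_add_sub_log_one_sub {u : ℝ} (h₀ : 0 ≤ u) (h₁ : u < 1) :
    2 * u ≤ log (1 + u) - log (1 - u) := by
  have hs := hasSum_log_sub_log_of_abs_lt_one (abs_lt.2 ⟨by linarith, h₁⟩)
  simpa using le_hasSum hs 0 fun k _ => by positivity

lemma log_one_add_sub_log_one_sub_le {u : ℝ} (h₀ : 0 ≤ u) (h₁ : u < 1) :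
    log (1 + u) - log (1 - u) ≤ 2 * u / (1 - u ^ 2) := by
  have hs := hasSum_log_sub_log_of_abs_lt_one (abs_lt.2 ⟨by linarith, h₁⟩)
  have hgeom := (hasSum_geometric_of_lt_one (sq_nonneg u) (by nlinarith)).mul_left (2 * u)
  refine (hasSum_le (fun k => ?_) hs hgeom).trans_eq (by rw [div_eq_mul_inv])
  have hk : 1 / (2 * (k : ℝ) + 1) ≤ 1 := by
    rw [div_le_one (by positivity)]; linarith [k.cast_nonneg (α := ℝ)]
  calc 2 * (1 / (2 * k + 1)) * u ^ (2 * k + 1) ≤ 2 * 1 * u ^ (2 * k + 1) := by gcongr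
    _ = 2 * u * (u ^ 2) ^ k := by ring

lemma hasDerivAt_log_two_sub_binEntropy_half_sub {t : ℝ} (ht : |t| < 1 / 2) :
    HasDerivAt (fun s => log 2 - binEntropy (1 / 2 - s)) (log (1 + 2 * t) - log (1 - 2 * t)) t := by
  obtain ⟨ht₀, ht₁⟩ := abs_lt.1 ht
  have hp := (hasDerivAt_binEntropy (p := 1 / 2 - t) (by linarith) (by linarith)).comp t
    ((hasDerivAt_id t).const_sub (1 / 2))
  refine (hp.const_sub (log 2)).congr_deriv ?_
  rw [show 1 - (1 / 2 - t) = (1 + 2 * t) / 2 by ring, show 1 / 2 - t = (1 - 2 * t) / 2 by ring,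
    log_div (by linarith) two_ne_zero, log_div (by linarith) two_ne_zero]
  ring

lemma two_mul_sq_le_log_two_sub_binEntropy_half_sub {t : ℝ} (h₀ : 0 ≤ t) (h₁ : t ≤ 1 / 2) :
    2 * t ^ 2 ≤ log 2 - binEntropy (1 / 2 - t) := by
  refine image_le_of_deriv_right_le_deriv_boundary (f := fun s => 2 * s ^ 2) (f' := fun s => 4 * s)
    (B := fun s => log 2 - binEntropy (1 / 2 - s)) (B' := fun s => log (1 + 2 * s) - log (1 - 2 * s))
    (a := 0) (b := 1 / 2)
    (by fun_prop) (fun s _ => ?_) (by simp) (by fun_prop) (fun s hs => ?_) (fun s hs => ?_) ⟨h₀, h₁⟩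
  · exact ((hasDerivAt_pow 2 s).const_mul 2).hasDerivWithinAt.congr_deriv (by ring)
  · exact (hasDerivAt_log_two_sub_binEntropy_half_sub
      (abs_lt.2 ⟨by linarith [hs.1], hs.2⟩)).hasDerivWithinAt
  · linarith [two_mul_le_log_one_add_sub_log_one_sub (u := 2 * s) (by linarith [hs.1])
      (by linarith [hs.2])]

lemma log_two_sub_binEntropy_half_sub_le {t : ℝ} (h₀ : 0 ≤ t) (h₁ : t ≤ 1 / 4) :
    log 2 - binEntropy (1 / 2 - t) ≤ 2 * t ^ 2 + 8 * t ^ 4 := by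
  refine image_le_of_deriv_right_le_deriv_boundary (f := fun s => log 2 - binEntropy (1 / 2 - s))
    (f' := fun s => log (1 + 2 * s) - log (1 - 2 * s))
    (B := fun s => 2 * s ^ 2 + 8 * s ^ 4) (B' := fun s => 4 * s + 32 * s ^ 3) (a := 0) (b := 1 / 4)
    (by fun_prop) (fun s hs => ?_) (by simp) (by fun_prop) (fun s _ => ?_)
    (fun s hs => ?_) ⟨h₀, h₁⟩
  · exact (hasDerivAt_log_two_sub_binEntropy_half_sub
      (abs_lt.2 ⟨by linarith [hs.1], by linarith [hs.2]⟩)).hasDerivWithinAt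
  · exact (((hasDerivAt_pow 2 s).const_mul 2).add
      ((hasDerivAt_pow 4 s).const_mul 8)).hasDerivWithinAt.congr_deriv (by ring)
  · obtain ⟨hs₀, hs₁⟩ := hs
    have hu : 1 / 2 ≤ 1 - (2 * s) ^ 2 := by nlinarith
    calc log (1 + 2 * s) - log (1 - 2 * s) ≤ 2 * (2 * s) / (1 - (2 * s) ^ 2) :=
          log_one_add_sub_log_one_sub_le (by linarith) (by linarith)
      _ ≤ 4 * s + 32 * s ^ 3 := by
          rw [div_le_iff₀ (by linarith)]; nlinarith [pow_nonneg hs₀ 3]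

end Real

theorem binEntropy_inv_expansion :
    ∃ C ε₀ : ℝ, 0 < C ∧ 0 < ε₀ ∧
      ∀ ε x : ℝ, 0 < ε → ε < ε₀ → x ∈ Set.Icc (0 : ℝ) (1 / 2) →
        -x * Real.log x - (1 - x) * Real.log (1 - x) = Real.log 2 - ε →
        |x - (1 / 2 - Real.sqrt (ε / 2))| ≤ C * ε ^ ((3 : ℝ) / 2) := by
  refine ⟨1, 1 / 8, one_pos, by norm_num, fun ε x hε hε₀ hx hxε => ?_⟩
  obtain ⟨t, rfl⟩ : ∃ t, x = 1 / 2 - t := ⟨1 / 2 - x, by ring⟩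
  have ht₀ : 0 ≤ t := by linarith [hx.2]
  have hεt : ε = log 2 - binEntropy (1 / 2 - t) := by
    simp only [binEntropy, log_inv]
    linarith
  have hlo : 2 * t ^ 2 ≤ ε :=
    hεt ▸ two_mul_sq_le_log_two_sub_binEntropy_half_sub ht₀ (by linarith [hx.1])
  have ht_small : t ≤ 1 / 4 := by nlinarith
  have hhi : ε ≤ 2 * t ^ 2 + 8 * t ^ 4 := hεt ▸ log_two_sub_binEntropy_half_sub_le ht₀ ht_small
  have hsqrt_lo : t ≤ √(ε / 2) := (le_sqrt ht₀ (by positivity)).2 (by linarith)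
  have hsqrt_hi : √(ε / 2) ≤ t + 2 * t ^ 3 :=
    sqrt_le_iff.2 ⟨by positivity, by nlinarith [pow_nonneg ht₀ 6]⟩
  have ht_sqrt : t ≤ √ε := hsqrt_lo.trans (sqrt_le_sqrt (by linarith))
  have hpow : ε ^ ((3 : ℝ) / 2) = ε * √ε := by
    rw [show (3 : ℝ) / 2 = 1 + 1 / 2 by norm_num, rpow_add hε, rpow_one, sqrt_eq_rpow]
  rw [show 1 / 2 - t - (1 / 2 - √(ε / 2)) = √(ε / 2) - t by ring, abs_of_nonneg (by linarith),
    one_mul, hpow]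
  calc √(ε / 2) - t ≤ 2 * t ^ 2 * t := by linarith
    _ ≤ ε * √ε := by gcongr
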